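/- The assignment (n, m) ↦ [β]^n * [α]^m defines a group isomorphism from ℤ × ℤ (under componentwise addition) onto π₁(S¹ × S¹, (1,1)). -/

import Mathlib

attribute [local instance] Path.Homotopic.setoid

/-- The standard loop in the circle based at `1`, given by `t ↦ exp (2 π i t)`. -/
noncomputable def circleLoop : Path (1 : Circle) 1 where
  toFun t := Circle.exp (2 * Real.pi * t)
  continuous_toFun := Circle.exp.continuous.comp (continuous_const.mul continuous_subtype_val)
  source' := by simp
  target' := by simp

/-- The loop `α` in the torus based at `(1, 1)`, given by `t ↦ (exp (2 π i t), 1)`. -/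
noncomputable def torusLoopA : Path ((1 : Circle), (1 : Circle)) ((1 : Circle), (1 : Circle)) :=
  circleLoop.prod (Path.refl (1 : Circle))

/-- The loop `β` in the torus based at `(1, 1)`, given by `t ↦ (1, exp (2 π i t))`. -/
noncomputable def torusLoopB : Path ((1 : Circle), (1 : Circle)) ((1 : Circle), (1 : Circle)) :=
  (Path.refl (1 : Circle)).prod circleLoop

/-- The homotopy class of `α` in the fundamental group of the torus. -/
noncomputable def torusClassA : FundamentalGroup (Circle × Circle) ((1 : Circle), (1 : Circle)) :=
  FundamentalGroup.fromPath (X := TopCat.of (Circle × Circle)) ⟦torusLoopA⟧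

/-- The homotopy class of `β` in the fundamental group of the torus. -/
noncomputable def torusClassB : FundamentalGroup (Circle × Circle) ((1 : Circle), (1 : Circle)) :=
  FundamentalGroup.fromPath (X := TopCat.of (Circle × Circle)) ⟦torusLoopB⟧
/-!
`Circle.exp : ℝ → S¹` is a covering map which is the quotient by the deck group `2πℤ ≅ ℤ`, and `ℝ`
is simply connected, so monodromy identifies `π₁(S¹, 1)` with `ℤ`; the loop `t ↦ exp (2πit)` lifts
to `t ↦ 2πt`, hence its class corresponds to a generator. Loops in a product are pairs of loops up
to homotopy, so `π₁(S¹ × S¹) ≅ π₁(S¹) × π₁(S¹) ≅ ℤ × ℤ`, with `α` and `β` the two coordinate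
generators.
-/

namespace FundamentalGroup

variable {X Y : Type*} [TopologicalSpace X] [TopologicalSpace Y] (x : X) (y : Y)

noncomputable def prodMulEquiv :
    FundamentalGroup X x × FundamentalGroup Y y ≃* FundamentalGroup (X × Y) (x, y) where
  toFun g := fromPath (Path.Homotopic.prod (toPath g.1) (toPath g.2))
  invFun g := (fromPath (Path.Homotopic.projLeft (toPath g)),
    fromPath (Path.Homotopic.projRight (toPath g)))
  left_inv _ := Prod.ext (Path.Homotopic.projLeft_prod _ _) (Path.Homotopic.projRight_prod _ _)
  right_inv _ := Path.Homotopic.prod_projLeft_projRight _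
  map_mul' _ _ := (Path.Homotopic.comp_prod_eq_prod_comp _ _ _ _).symm

end FundamentalGroup

lemma AddSubgroup.zmultiples_mk_self_eq_top {G : Type*} [AddGroup G] (a : G) :
    zmultiples (⟨a, mem_zmultiples a⟩ : zmultiples a) = ⊤ := by
  rw [eq_top_iff]
  rintro ⟨_, k, rfl⟩ -
  exact ⟨k, rfl⟩

noncomputable def circleLoopClass : FundamentalGroup Circle 1 :=
  FundamentalGroup.fromPath ⟦circleLoop⟧

lemma liftPath_circleLoop_apply_one
    (h : (circleLoop : C(unitInterval, Circle)) 0 = Circle.exp 0) :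
    Circle.isCoveringMap_exp.liftPath circleLoop 0 h 1 = 2 * Real.pi := by
  have hlift := (Circle.isCoveringMap_exp.eq_liftPath_iff h
    (Γ := fun t : unitInterval => 2 * Real.pi * t)).mpr ⟨by fun_prop, rfl, by simp⟩
  simp [← hlift]

theorem bijective_zpow_circleLoopClass : Function.Bijective (circleLoopClass ^ · : ℤ → _) := by
  have hp := Circle.isAddQuotientCoveringMap_exp
  let e : Circle.exp ⁻¹' {1} := ⟨0, by simp⟩
  let ψ := hp.fundamentalGroupToMulOpposite e
  have hψ : Function.Bijective ψ :=
    ⟨hp.fundamentalGroupToMulOpposite_injective e, hp.fundamentalGroupToMulOpposite_surjective e⟩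
  have hψc : ψ circleLoopClass =
      MulOpposite.op (Multiplicative.ofAdd ⟨2 * Real.pi, AddSubgroup.mem_zmultiples _⟩) := by
    rw [IsAddQuotientCoveringMap.fundamentalGroupToMulOpposite_apply_eq_Iff]
    simp only [MulOpposite.unop_op, ofAdd_smul, AddSubgroup.mk_vadd, vadd_eq_add, add_zero, e]
    exact (liftPath_circleLoop_apply_one _).symm
  have : Infinite (AddSubgroup.zmultiples (2 * Real.pi)) :=
    Set.infinite_coe_iff.mpr (infinite_zmultiples.mpr (by
      simp [isOfFinAddOrder_iff_eq_zero, Real.pi_ne_zero]))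
  rw [← hψ.of_comp_iff']
  convert MulOpposite.opEquiv.bijective.comp (Multiplicative.ofAdd.bijective.comp
    (zmultiplesHom_bijective (AddSubgroup.zmultiples_mk_self_eq_top (2 * Real.pi))))
  funext n
  show ψ (circleLoopClass ^ n) = _
  rw [map_zpow, hψc]
  rfl

lemma torusClassB_zpow_mul_torusClassA_zpow (n m : ℤ) :
    torusClassB ^ n * torusClassA ^ m =
      FundamentalGroup.prodMulEquiv 1 1 (circleLoopClass ^ m, circleLoopClass ^ n) := by
  have hA : torusClassA = FundamentalGroup.prodMulEquiv 1 1 (circleLoopClass, 1) := rfl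
  have hB : torusClassB = FundamentalGroup.prodMulEquiv 1 1 (1, circleLoopClass) := rfl
  rw [hA, hB, ← map_zpow, ← map_zpow, ← map_mul, Prod.pow_mk, Prod.pow_mk, Prod.mk_mul_mk,
    one_zpow, one_zpow, mul_one, one_mul]

/-- The assignment `(n, m) ↦ [β]^n * [α]^m` defines a group isomorphism from `ℤ × ℤ`
(under componentwise addition) onto the fundamental group of the torus: it is bijective
and turns addition into multiplication. -/
theorem torus_fundamentalGroup_iso_via_generators :
    Function.Bijective (fun p : ℤ × ℤ => torusClassB ^ p.1 * torusClassA ^ p.2) ∧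
      ∀ p q : ℤ × ℤ,
        torusClassB ^ (p + q).1 * torusClassA ^ (p + q).2 =
          (torusClassB ^ p.1 * torusClassA ^ p.2) * (torusClassB ^ q.1 * torusClassA ^ q.2) := by
  simp only [torusClassB_zpow_mul_torusClassA_zpow, ← map_mul]
  refine ⟨?_, fun p q => ?_⟩
  · exact (FundamentalGroup.prodMulEquiv 1 1).bijective.comp
      ((bijective_zpow_circleLoopClass.prodMap bijective_zpow_circleLoopClass).comp
        Prod.swap_bijective)
  · simp [zpow_add]
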